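/- Let $s,t \in \mathbb{R}_{\ge 0}^4$ satisfy $s_1 t_1 = s_2 t_2 = s_3 t_3 = s_4 t_4$. Then $A(s,t) = 2\sqrt[4]{s_1 t_2 t_3 s_4} + 2\sqrt[4]{t_1 s_2 s_3 t_4}$. -/

import Mathlib

/-!
Under `s₁t₁ = s₄t₄` the first factor pair is an equality case of Cauchy–Schwarz,
`(s₁/r + t₄r)(s₄/r + t₁r) = (√(s₁s₄)/r + √(t₁t₄)r)²`, and likewise for the second pair, so the
objective collapses to `A/r + Br` with `A = √(s₁s₄) + √(s₂s₃)`, `B = √(t₁t₄) + √(t₂t₃)`.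
Its infimum over `r > 0` is `2√(AB)` by AM–GM, and expanding `AB` with
`√(s₁s₄)√(t₁t₄) = √(s₂s₃)√(t₂t₃)` gives `√(AB) = ⁴√(s₁t₂t₃s₄) + ⁴√(t₁s₂s₃t₄)`.
-/

open Real

noncomputable def Afun (s t : Fin 4 → ℝ) : ℝ :=
  sInf {x : ℝ | ∃ r : ℝ, 0 < r ∧
    x = Real.sqrt ((s 0 / r + t 3 * r) * (s 3 / r + t 0 * r)) +
        Real.sqrt ((s 1 / r + t 2 * r) * (s 2 / r + t 1 * r))}

lemma sqrt_div_add_mul_mul_div_add_mul {a b c d r : ℝ} (ha : 0 ≤ a) (hb : 0 ≤ b) (hc : 0 ≤ c)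
    (hd : 0 ≤ d) (hr : 0 < r) (h : a * d = c * b) :
    √((a / r + b * r) * (c / r + d * r)) = √(a * c) / r + √(b * d) * r := by
  have hcross : √(a * c) * √(b * d) = a * d := by
    rw [← sqrt_mul (by positivity), show a * c * (b * d) = (a * d) * (a * d) by
      linear_combination (-(a * d)) * h, sqrt_mul_self (by positivity)]
  rw [← sqrt_sq (by positivity : 0 ≤ √(a * c) / r + √(b * d) * r)]
  congr 1
  field_simp
  linear_combination (-1 : ℝ) * sq_sqrt (mul_nonneg ha hc) - r ^ 4 * sq_sqrt (mul_nonneg hb hd)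
    - 2 * r ^ 2 * hcross - r ^ 2 * h

section DivAddMul

variable {A B : ℝ}

lemma two_sqrt_mul_le_div_add_mul (hA : 0 ≤ A) (hB : 0 ≤ B) {r : ℝ} (hr : 0 < r) :
    2 * √(A * B) ≤ A / r + B * r := by
  have hsplit : √(A * B) = √(A / r) * √(B * r) := by
    rw [← sqrt_mul (by positivity)]
    congr 1
    field_simp
  rw [hsplit, ← mul_assoc]
  calc 2 * √(A / r) * √(B * r) ≤ √(A / r) ^ 2 + √(B * r) ^ 2 := two_mul_le_add_sq _ _
    _ = A / r + B * r := by rw [sq_sqrt (by positivity), sq_sqrt (by positivity)]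

lemma exists_div_add_mul_lt (hA : 0 ≤ A) (hB : 0 ≤ B) {w : ℝ} (hw : 2 * √(A * B) < w) :
    ∃ r, 0 < r ∧ A / r + B * r < w := by
  rcases hA.eq_or_lt with rfl | hA
  · have hw : 0 < w := by simpa using hw
    refine ⟨w / (B + 1), by positivity, ?_⟩
    rw [zero_div, zero_add, mul_div, div_lt_iff₀ (by positivity)]
    nlinarith
  rcases hB.eq_or_lt with rfl | hB
  · have hw : 0 < w := by simpa using hw
    refine ⟨(A + 1) / w, by positivity, ?_⟩
    rw [zero_mul, add_zero, div_div_eq_mul_div, div_lt_iff₀ (by positivity)]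
    nlinarith
  -- the minimum is attained at `r = √(A/B)`
  refine ⟨√A / √B, by positivity, lt_of_eq_of_lt ?_ hw⟩
  have hsA := sq_sqrt hA.le
  have hsB := sq_sqrt hB.le
  have : 0 < √B := sqrt_pos.2 hB
  have : 0 < √A := sqrt_pos.2 hA
  rw [sqrt_mul hA.le]
  field_simp
  rw [hsA, hsB]
  ring

lemma sInf_div_add_mul (hA : 0 ≤ A) (hB : 0 ≤ B) :
    sInf {x : ℝ | ∃ r : ℝ, 0 < r ∧ x = A / r + B * r} = 2 * √(A * B) := by
  refine csInf_eq_of_forall_ge_of_forall_gt_exists_lt ⟨_, 1, one_pos, rfl⟩ ?_ ?_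
  · rintro x ⟨r, hr, rfl⟩
    exact two_sqrt_mul_le_div_add_mul hA hB hr
  · intro w hw
    obtain ⟨r, hr, hlt⟩ := exists_div_add_mul_lt hA hB hw
    exact ⟨_, ⟨r, hr, rfl⟩, hlt⟩

end DivAddMul

lemma sqrt_add_mul_add_of_mul_eq {a b c d : ℝ} (ha : 0 ≤ a) (hb : 0 ≤ b) (hc : 0 ≤ c)
    (hd : 0 ≤ d) (h : a * c = b * d) :
    √((a + b) * (c + d)) = √(a * d) + √(b * c) := by
  have hcross : √(a * d) * √(b * c) = a * c := by
    rw [← sqrt_mul (by positivity), show a * d * (b * c) = (a * c) * (a * c) by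
      linear_combination (-(a * c)) * h, sqrt_mul_self (by positivity)]
  rw [← sqrt_sq (by positivity : 0 ≤ √(a * d) + √(b * c))]
  congr 1
  linear_combination (-1 : ℝ) * sq_sqrt (mul_nonneg ha hd) - sq_sqrt (mul_nonneg hb hc)
    - 2 * hcross - h

lemma sqrt_sqrt_eq_rpow {x : ℝ} (hx : 0 ≤ x) : √(√x) = x ^ ((1 : ℝ) / 4) := by
  rw [sqrt_eq_rpow, sqrt_eq_rpow, ← rpow_mul hx]
  norm_num

lemma sqrt_mul_sqrt_eq_rpow {a b x : ℝ} (ha : 0 ≤ a) (hb : 0 ≤ b) (hx : a * b = x) :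
    √(√a * √b) = x ^ ((1 : ℝ) / 4) := by
  rw [← sqrt_mul ha, hx, sqrt_sqrt_eq_rpow (hx ▸ mul_nonneg ha hb)]

theorem stmt_2 (s t : Fin 4 → ℝ) (hs : ∀ i, 0 ≤ s i) (ht : ∀ i, 0 ≤ t i)
    (h : s 0 * t 0 = s 1 * t 1 ∧ s 1 * t 1 = s 2 * t 2 ∧ s 2 * t 2 = s 3 * t 3) :
    Afun s t = 2 * (s 0 * t 1 * t 2 * s 3) ^ ((1 : ℝ) / 4)
             + 2 * (t 0 * s 1 * s 2 * t 3) ^ ((1 : ℝ) / 4) := by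
  obtain ⟨h01, h12, h23⟩ := h
  have hs03 := mul_nonneg (hs 0) (hs 3)
  have hs12 := mul_nonneg (hs 1) (hs 2)
  have ht30 := mul_nonneg (ht 3) (ht 0)
  have ht21 := mul_nonneg (ht 2) (ht 1)
  have hAfun : Afun s t = sInf {x : ℝ | ∃ r : ℝ, 0 < r ∧
      x = (√(s 0 * s 3) + √(s 1 * s 2)) / r + (√(t 3 * t 0) + √(t 2 * t 1)) * r} := by
    refine congrArg sInf (Set.ext fun x => exists_congr fun r => and_congr_right fun hr => ?_)
    rw [sqrt_div_add_mul_mul_div_add_mul (hs 0) (ht 3) (hs 3) (ht 0) hr (by linarith),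
      sqrt_div_add_mul_mul_div_add_mul (hs 1) (ht 2) (hs 2) (ht 1) hr h12]
    congr! 1
    ring
  have hcross : √(s 0 * s 3) * √(t 3 * t 0) = √(s 1 * s 2) * √(t 2 * t 1) := by
    rw [← sqrt_mul hs03, ← sqrt_mul hs12]
    congr 1
    linear_combination (s 3 * t 3) * h01 - (s 1 * t 1) * h23
  rw [hAfun, sInf_div_add_mul (by positivity) (by positivity),
    sqrt_add_mul_add_of_mul_eq (sqrt_nonneg _) (sqrt_nonneg _) (sqrt_nonneg _) (sqrt_nonneg _)
      hcross, sqrt_mul_sqrt_eq_rpow (x := s 0 * t 1 * t 2 * s 3) hs03 ht21 (by ring),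
    sqrt_mul_sqrt_eq_rpow (x := t 0 * s 1 * s 2 * t 3) hs12 ht30 (by ring)]
  ring
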